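/- Let k be a field of characteristic 2 and let h_n be the (2n+1)-dimensional Heisenberg Lie algebra over k. Then the generating function of the Betti numbers of the Lie algebra homology of h_n with trivial coefficients satisfies the polynomial identity (1 + t^2) * (Σ_{i ≥ 0} dim_k H_i(h_n; k) · t^i) = (1 + t^3)(1 + t)^{2n} + (t + t^2)(2t)^n, equivalently Σ_{i ≥ 0} dim_k H_i(h_n; k) · t^i = ((1 + t^3)(1 + t)^{2n} + (t + t^2)(2t)^n)/(1 + t^2). -/

import Mathlib

open Polynomial

/-- Index of the standard monomial basis of the exterior algebra `Λ^• h_n` of the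
`(2n+1)`-dimensional Heisenberg Lie algebra with basis `z, x_1, …, x_n, y_1, …, y_n`:
the monomial `z^ε ∧ x_I ∧ y_J` (with `I`, `J` in increasing order) is encoded as
`(ε, I, J)`. -/
abbrev HeisIdx (n : ℕ) := Bool × Finset (Fin n) × Finset (Fin n)

/-- Homological degree of a basis monomial: `deg (z^ε ∧ x_I ∧ y_J) = ε + |I| + |J|`. -/
def heisDeg {n : ℕ} (p : HeisIdx n) : ℕ :=
  (if p.1 then 1 else 0) + p.2.1.card + p.2.2.card

/-- `Λ^• h_n` as the `k`-vector space with basis the monomials `z^ε ∧ x_I ∧ y_J`. -/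
abbrev HeisCE (k : Type*) [Field k] (n : ℕ) := HeisIdx n → k

variable (k : Type*) [Field k]

/-- Image of a basis monomial under the Chevalley–Eilenberg differential
`d(w_1 ∧ ⋯ ∧ w_p) = Σ_{i<j} (-1)^{i+j} [w_i,w_j] ∧ w_1 ∧ ⋯ ŵ_i ⋯ ŵ_j ⋯ ∧ w_p`
of the Heisenberg Lie algebra, whose only nonzero brackets on basis vectors are
`[x_i, y_i] = -[y_i, x_i] = z`.  Explicitly `d(z ∧ x_I ∧ y_J) = 0` and
`d(x_I ∧ y_J) = Σ_{t ∈ I∩J} (-1)^{a_t + |I| + b_t} z ∧ x_{I∖t} ∧ y_{J∖t}`, where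
`a_t`, `b_t` are the positions (ranks) of `t` in `I` resp. `J`. -/
noncomputable def heisDAux (n : ℕ) (p : HeisIdx n) : HeisCE k n :=
  if p.1 then 0 else
    ∑ t ∈ p.2.1 ∩ p.2.2,
      ((-1 : k) ^ ((p.2.1.filter (· ≤ t)).card + p.2.1.card +
          (p.2.2.filter (· ≤ t)).card)) •
        (Pi.single (true, p.2.1.erase t, p.2.2.erase t) (1 : k) : HeisCE k n)

/-- The Chevalley–Eilenberg differential of the Heisenberg Lie algebra, as the linear
map determined on the standard exterior basis by `heisDAux`. -/
noncomputable def heisD (n : ℕ) : HeisCE k n →ₗ[k] HeisCE k n :=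
  ∑ p : HeisIdx n, (LinearMap.proj p).smulRight (heisDAux k n p)

/-- The degree-`i` part `Λ^i h_n`: the subspace spanned by the monomials of degree `i`. -/
def heisChains (n i : ℕ) : Submodule k (HeisCE k n) where
  carrier := {f | ∀ p : HeisIdx n, heisDeg p ≠ i → f p = 0}
  add_mem' hf hg p hp := by simp [hf p hp, hg p hp]
  zero_mem' p _ := rfl
  smul_mem' c f hf p hp := by simp [hf p hp]

/-- The `i`-cycles: the kernel of `d : Λ^i h_n → Λ^{i-1} h_n`. -/
noncomputable def heisCycles (n i : ℕ) : Submodule k (HeisCE k n) :=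
  LinearMap.ker (heisD k n) ⊓ heisChains k n i

/-- The `i`-boundaries: the image of `d : Λ^{i+1} h_n → Λ^i h_n`. -/
noncomputable def heisBoundaries (n i : ℕ) : Submodule k (HeisCE k n) :=
  Submodule.map (heisD k n) (heisChains k n (i + 1))

/-- The `i`-th Lie algebra homology `H_i(h_n; k)` of the Heisenberg Lie algebra with
trivial coefficients: cycles modulo boundaries in the Chevalley–Eilenberg complex. -/
noncomputable def HeisHomology (n i : ℕ) :=
  heisCycles k n i ⧸
    Submodule.comap (heisCycles k n i).subtype (heisBoundaries k n i)

noncomputable instance (n i : ℕ) : AddCommGroup (HeisHomology k n i) :=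
  inferInstanceAs (AddCommGroup (_ ⧸ _))

noncomputable instance (n i : ℕ) : Module k (HeisHomology k n i) :=
  inferInstanceAs (Module k (_ ⧸ _))

/-!
By rank–nullity, `b_i = c_i - r_i - r_{i+1}` where `c_i = dim Λ^i h_n` and `r_i` is the rank of
`d` on `Λ^i h_n`. In characteristic `2` the signs disappear: `d` kills every monomial containing
`z` and sends `x_I ∧ y_J` to `∑_{t ∈ I ∩ J} z ∧ x_{I∖t} ∧ y_{J∖t}`.

The pivot of a pair `(I, J)` is the least index on which `I` and `J` agree (both contain it or
both miss it). The images `d(x_I ∧ y_J)` of the pivotal pairs (pivot in `I ∩ J`) form a basis of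
the image of `d`. They are independent because `z ∧ x_I ∧ y_J ↦ x_{I+t} ∧ y_{J+t}`, for `t` the
pivot lying outside `I ∪ J`, is a left inverse of `d` on them. They span because for a copivotal
pair (pivot `t₀ ∉ I ∪ J`) we have `d(x_I ∧ y_J) = ∑_{t ∈ I ∩ J} d(x_{I-t+t₀} ∧ y_{J-t+t₀})`.
Adding the pivot is a bijection from copivotal to pivotal pairs raising the degree by `2`, and
the pairs without a pivot are the `2^n` pairs `(I, Iᶜ)` of degree `n`, so the generating
polynomial `P` of pivotal pairs satisfies `(1 + t²) P = t² ((1 + t)^{2n} - (2t)^n)`.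
-/

open Finset

theorem Finset.sum_sum_erase_eq_zero_of_symm {α M : Type*} [DecidableEq α] [AddCommMonoid M]
    (hM : ∀ x : M, x + x = 0) (s : Finset α) (F : α → α → M) (hF : ∀ t u, F t u = F u t) :
    ∑ t ∈ s, ∑ u ∈ s.erase t, F t u = 0 := by
  rw [← sum_finset_product' s.offDiag s (s.erase ·) fun p => by
    simp only [mem_offDiag, mem_erase]; tauto]
  refine sum_involution (fun p _ => p.swap) (fun p _ => by rw [Prod.fst_swap, Prod.snd_swap,
    hF p.2, hM]) (fun p hp _ h => (mem_offDiag.1 hp).2.2 (congrArg Prod.fst h).symm)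
    (fun p hp => ?_) (fun p _ => p.swap_swap)
  obtain ⟨h1, h2, h12⟩ := mem_offDiag.1 hp
  exact mem_offDiag.2 ⟨h2, h1, Ne.symm h12⟩

theorem Submodule.finrank_quotient_comap_subtype_add_finrank {K V : Type*} [DivisionRing K]
    [AddCommGroup V] [Module K V] [FiniteDimensional K V] {B Z : Submodule K V} (h : B ≤ Z) :
    Module.finrank K (Z ⧸ B.comap Z.subtype) + Module.finrank K B = Module.finrank K Z := by
  rw [← (comapSubtypeEquivOfLe h).finrank_eq, Submodule.finrank_quotient_add_finrank]

theorem LinearMap.finrank_ker_inf_add_finrank_map {K V W : Type*} [DivisionRing K]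
    [AddCommGroup V] [Module K V] [FiniteDimensional K V] [AddCommGroup W] [Module K W]
    (f : V →ₗ[K] W) (U : Submodule K V) :
    Module.finrank K ↥(LinearMap.ker f ⊓ U) + Module.finrank K (U.map f) =
      Module.finrank K U := by
  have h := (f.domRestrict U).finrank_range_add_finrank_ker
  rw [LinearMap.range_domRestrict, LinearMap.ker_domRestrict] at h
  rw [← (Submodule.comapSubtypeEquivOfLe (inf_le_right : ker f ⊓ U ≤ U)).finrank_eq,
    Submodule.comap_inf, Submodule.comap_subtype_self, inf_top_eq]
  omega

namespace Polynomial

theorem sum_range_card_filter_mul_X_pow {R α : Type*} [CommSemiring R] (s : Finset α)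
    (f : α → ℕ) {N : ℕ} (hf : ∀ x ∈ s, f x < N) :
    ∑ i ∈ range N, C (#{x ∈ s | f x = i} : R) * X ^ i = ∑ x ∈ s, X ^ f x := by
  rw [← sum_fiberwise_of_maps_to' (fun x hx => mem_range.2 (hf x hx))]
  simp [sum_const, nsmul_eq_mul]

theorem X_mul_sum_add_one_add_X_mul_sum {R : Type*} [CommRing R] {N : ℕ} (b r c : ℕ → R)
    (h : ∀ i < N, b i + r i + r (i + 1) = c i) (h0 : r 0 = 0) (hN : r N = 0) :
    X * ∑ i ∈ range N, C (b i) * X ^ i + (1 + X) * ∑ i ∈ range N, C (r i) * X ^ i =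
      X * ∑ i ∈ range N, C (c i) * X ^ i := by
  have hshift : X * ∑ i ∈ range N, C (r (i + 1)) * X ^ i = ∑ i ∈ range N, C (r i) * X ^ i := by
    have := sum_range_succ' (fun i => C (r i) * X ^ i) N
    rw [sum_range_succ, hN, h0] at this
    simp only [map_zero, zero_mul, add_zero, pow_succ] at this
    rw [mul_sum, this]
    exact sum_congr rfl fun i _ => by ring
  rw [← sum_congr rfl fun i hi => congrArg (fun x => C x * X ^ i) (h i (mem_range.1 hi))]
  simp only [map_add, add_mul, sum_add_distrib]
  linear_combination -hshift

end Polynomial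

namespace Heis

abbrev Pair (n : ℕ) := Finset (Fin n) × Finset (Fin n)

section Complex

variable {k : Type*} [Field k] {n : ℕ}

theorem heisD_apply (f : HeisCE k n) : heisD k n f = ∑ p, f p • heisDAux k n p := by
  simp [heisD, LinearMap.sum_apply]

theorem heisD_single (p : HeisIdx n) : heisD k n (Pi.single p 1) = heisDAux k n p := by
  rw [heisD_apply, sum_eq_single p (fun q _ hq => by simp [hq]) (by simp)]
  simp

theorem heisDAux_true (q : Pair n) : heisDAux k n (true, q) = 0 := by
  simp [heisDAux]

theorem heisDAux_apply_false (p : HeisIdx n) (q : Pair n) :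
    heisDAux k n p (false, q) = 0 := by
  unfold heisDAux
  split_ifs <;> simp

theorem heisD_heisD (f : HeisCE k n) : heisD k n (heisD k n f) = 0 := by
  rw [heisD_apply (heisD k n f)]
  refine sum_eq_zero fun ⟨ε, q⟩ _ => ?_
  cases ε
  · simp [heisD_apply f, heisDAux_apply_false]
  · rw [heisDAux_true, smul_zero]

theorem heisDAux_apply_of_heisDeg_ne (p q : HeisIdx n) (h : heisDeg q + 1 ≠ heisDeg p) :
    heisDAux k n p q = 0 := by
  obtain ⟨_ | _, I, J⟩ := p
  · simp only [heisDAux, Bool.false_eq_true, if_false, Finset.sum_apply, Pi.smul_apply]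
    refine sum_eq_zero fun t ht => ?_
    obtain ⟨htI, htJ⟩ := mem_inter.1 ht
    rw [Pi.single_apply, if_neg, smul_zero]
    rintro rfl
    have := card_pos.2 ⟨t, htI⟩
    have := card_pos.2 ⟨t, htJ⟩
    simp only [heisDeg, ↓reduceIte, Bool.false_eq_true, card_erase_of_mem htI,
      card_erase_of_mem htJ] at h
    omega
  · rw [heisDAux_true]; rfl

theorem heisD_mem_heisChains {f : HeisCE k n} {i : ℕ} (hf : f ∈ heisChains k n (i + 1)) :
    heisD k n f ∈ heisChains k n i := by
  intro q hq
  rw [heisD_apply, Finset.sum_apply]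
  refine sum_eq_zero fun p _ => ?_
  by_cases hp : heisDeg p = i + 1
  · rw [Pi.smul_apply, heisDAux_apply_of_heisDeg_ne p q (by omega), smul_zero]
  · rw [Pi.smul_apply, hf p hp, zero_smul]

theorem heisChains_eq_span (i : ℕ) :
    heisChains k n i = Submodule.span k (Pi.basisFun k (HeisIdx n) '' {p | heisDeg p = i}) := by
  ext f
  rw [(Pi.basisFun k (HeisIdx n)).mem_span_image]
  simp only [heisChains, Submodule.mem_mk, AddSubmonoid.mem_mk, AddSubsemigroup.mem_mk,
    Set.mem_ofPred_eq, Set.subset_def, Finset.mem_coe, Finsupp.mem_support_iff, Pi.basisFun_repr]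
  exact forall_congr' fun p => not_imp_comm

theorem finrank_heisChains (i : ℕ) :
    Module.finrank k (heisChains k n i) = #{p : HeisIdx n | heisDeg p = i} := by
  rw [heisChains_eq_span, Set.image_eq_range]
  exact (finrank_span_eq_card ((Pi.basisFun k _).linearIndependent.comp _
    Subtype.val_injective)).trans (Fintype.card_subtype _)

theorem heisBoundaries_le_heisCycles (i : ℕ) : heisBoundaries k n i ≤ heisCycles k n i := by
  rintro _ ⟨f, hf, rfl⟩
  exact ⟨heisD_heisD f, heisD_mem_heisChains hf⟩

theorem finrank_heisHomology_add (i : ℕ) :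
    Module.finrank k (HeisHomology k n i) + Module.finrank k ((heisChains k n i).map (heisD k n)) +
      Module.finrank k ((heisChains k n (i + 1)).map (heisD k n)) =
        Module.finrank k (heisChains k n i) := by
  have hZ : Module.finrank k (heisCycles k n i) +
      Module.finrank k ((heisChains k n i).map (heisD k n)) =
        Module.finrank k (heisChains k n i) :=
    (heisD k n).finrank_ker_inf_add_finrank_map _
  have hH : Module.finrank k (HeisHomology k n i) + Module.finrank k (heisBoundaries k n i) =
      Module.finrank k (heisCycles k n i) :=
    Submodule.finrank_quotient_comap_subtype_add_finrank (heisBoundaries_le_heisCycles i)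
  rw [heisBoundaries] at hH
  omega

end Complex

section Pairs

variable {n : ℕ}

def pairDeg (q : Pair n) : ℕ := #q.1 + #q.2

@[simp]
theorem heisDeg_false (q : Pair n) : heisDeg (false, q) = pairDeg q := by
  simp [heisDeg, pairDeg]

@[simp]
theorem heisDeg_true (q : Pair n) : heisDeg (true, q) = pairDeg q + 1 := by
  simp only [heisDeg, ↓reduceIte, pairDeg]
  omega

def agreeSet (q : Pair n) : Finset (Fin n) := {t | t ∈ q.1 ↔ t ∈ q.2}

def pivot (q : Pair n) : WithTop (Fin n) := (agreeSet q).min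

def IsPivotal (q : Pair n) : Prop := ∃ t ∈ q.1, pivot q = t

def IsCopivotal (q : Pair n) : Prop := ∃ t ∉ q.1, pivot q = t

instance : DecidablePred (IsPivotal (n := n)) := fun _ => inferInstanceAs (Decidable (∃ _, _))

instance : DecidablePred (IsCopivotal (n := n)) := fun _ => inferInstanceAs (Decidable (∃ _, _))

def insertBoth (t : Fin n) (q : Pair n) : Pair n := (insert t q.1, insert t q.2)

def eraseBoth (t : Fin n) (q : Pair n) : Pair n := (q.1.erase t, q.2.erase t)

def raise (q : Pair n) : Pair n := WithTop.recTopCoe q (insertBoth · q) (pivot q)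

def lower (q : Pair n) : Pair n := WithTop.recTopCoe q (eraseBoth · q) (pivot q)

theorem mem_agreeSet {q : Pair n} {t : Fin n} : t ∈ agreeSet q ↔ (t ∈ q.1 ↔ t ∈ q.2) := by
  simp [agreeSet]

theorem mem_snd_iff_of_pivot_eq {q : Pair n} {t : Fin n} (h : pivot q = t) :
    t ∈ q.2 ↔ t ∈ q.1 :=
  (mem_agreeSet.1 (mem_of_min h)).symm

theorem isCopivotal_iff_of_pivot_eq {q : Pair n} {t : Fin n} (h : pivot q = t) :
    IsCopivotal q ↔ t ∉ q.1 := by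
  simp [IsCopivotal, h]

theorem pivot_eraseBoth {q : Pair n} {t : Fin n} (h : t ∈ q.1 ↔ t ∈ q.2) :
    pivot (eraseBoth t q) = pivot q := by
  refine congrArg Finset.min (Finset.ext fun a => ?_)
  by_cases ha : a = t
  · subst ha; simp [mem_agreeSet, eraseBoth, h]
  · simp [mem_agreeSet, eraseBoth, ha]

theorem pivot_insertBoth {q : Pair n} {t : Fin n} (h : t ∈ q.1 ↔ t ∈ q.2) :
    pivot (insertBoth t q) = pivot q := by
  refine congrArg Finset.min (Finset.ext fun a => ?_)
  by_cases ha : a = t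
  · subst ha; simp [mem_agreeSet, insertBoth, h]
  · simp [mem_agreeSet, insertBoth, ha]

theorem pivot_eq_top_iff {q : Pair n} : pivot q = ⊤ ↔ q.2 = q.1ᶜ := by
  simp only [pivot, Finset.min_eq_top, mem_agreeSet,
    Finset.ext_iff, Finset.mem_compl]
  exact forall_congr' fun t => by tauto

theorem eraseBoth_insertBoth {q : Pair n} {t : Fin n} (h₁ : t ∉ q.1) (h₂ : t ∉ q.2) :
    eraseBoth t (insertBoth t q) = q :=
  Prod.ext (erase_insert h₁) (erase_insert h₂)

theorem eraseBoth_insertBoth_of_ne {q : Pair n} {t u : Fin n} (h : u ≠ t) :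
    eraseBoth u (insertBoth t q) = insertBoth t (eraseBoth u q) :=
  Prod.ext (erase_insert_of_ne h.symm) (erase_insert_of_ne h.symm)

theorem eraseBoth_comm (q : Pair n) (t u : Fin n) :
    eraseBoth u (eraseBoth t q) = eraseBoth t (eraseBoth u q) :=
  Prod.ext (erase_right_comm ..) (erase_right_comm ..)

theorem insertBoth_eraseBoth {q : Pair n} {t : Fin n} (h₁ : t ∈ q.1) (h₂ : t ∈ q.2) :
    insertBoth t (eraseBoth t q) = q :=
  Prod.ext (insert_erase h₁) (insert_erase h₂)

theorem raise_of_pivot_eq {q : Pair n} {t : Fin n} (h : pivot q = t) :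
    raise q = insertBoth t q := by
  rw [raise, h, WithTop.recTopCoe_coe]

theorem lower_of_pivot_eq {q : Pair n} {t : Fin n} (h : pivot q = t) :
    lower q = eraseBoth t q := by
  rw [lower, h, WithTop.recTopCoe_coe]

theorem IsCopivotal.isPivotal_raise {q : Pair n} (h : IsCopivotal q) : IsPivotal (raise q) := by
  obtain ⟨t, ht, hpiv⟩ := h
  rw [raise_of_pivot_eq hpiv]
  refine ⟨t, mem_insert_self t q.1, ?_⟩
  rwa [pivot_insertBoth (by rw [mem_snd_iff_of_pivot_eq hpiv])]

theorem IsPivotal.isCopivotal_lower {q : Pair n} (h : IsPivotal q) : IsCopivotal (lower q) := by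
  obtain ⟨t, ht, hpiv⟩ := h
  rw [lower_of_pivot_eq hpiv]
  refine ⟨t, notMem_erase t q.1, ?_⟩
  rwa [pivot_eraseBoth (by rw [mem_snd_iff_of_pivot_eq hpiv])]

theorem IsCopivotal.lower_raise {q : Pair n} (h : IsCopivotal q) : lower (raise q) = q := by
  obtain ⟨t, ht, hpiv⟩ := h
  have ht' : t ∉ q.2 := by rwa [mem_snd_iff_of_pivot_eq hpiv]
  rw [raise_of_pivot_eq hpiv, lower_of_pivot_eq (by rwa [pivot_insertBoth (by tauto)]),
    eraseBoth_insertBoth ht ht']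

theorem IsPivotal.raise_lower {q : Pair n} (h : IsPivotal q) : raise (lower q) = q := by
  obtain ⟨t, ht, hpiv⟩ := h
  have ht' : t ∈ q.2 := by rwa [mem_snd_iff_of_pivot_eq hpiv]
  rw [lower_of_pivot_eq hpiv, raise_of_pivot_eq (by rwa [pivot_eraseBoth (by tauto)]),
    insertBoth_eraseBoth ht ht']

theorem IsCopivotal.pairDeg_raise {q : Pair n} (h : IsCopivotal q) :
    pairDeg (raise q) = pairDeg q + 2 := by
  obtain ⟨t, ht, hpiv⟩ := h
  have ht' : t ∉ q.2 := by rwa [mem_snd_iff_of_pivot_eq hpiv]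
  rw [raise_of_pivot_eq hpiv]
  simp only [pairDeg, insertBoth, card_insert_of_notMem ht, card_insert_of_notMem ht']
  omega

theorem isCopivotal_eraseBoth_iff {q : Pair n} {t₀ t : Fin n} (hpiv : pivot q = t₀)
    (h₀ : t₀ ∈ q.1) (ht : t ∈ q.1 ∩ q.2) : IsCopivotal (eraseBoth t q) ↔ t = t₀ := by
  have hpiv' : pivot (eraseBoth t q) = t₀ := by
    rw [pivot_eraseBoth (by simp_all), hpiv]
  rw [isCopivotal_iff_of_pivot_eq hpiv']
  simp [eraseBoth, h₀, eq_comm]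

theorem isPivotal_insertBoth_eraseBoth {q : Pair n} {t₀ t : Fin n} (hpiv : pivot q = t₀)
    (h₀ : t₀ ∉ q.1) (ht : t ∈ q.1 ∩ q.2) : IsPivotal (insertBoth t₀ (eraseBoth t q)) := by
  have h₀' : t₀ ∉ q.2 := by rwa [mem_snd_iff_of_pivot_eq hpiv]
  refine ⟨t₀, mem_insert_self _ _, ?_⟩
  rw [pivot_insertBoth (by simp [eraseBoth, h₀, h₀']), pivot_eraseBoth (by simp_all), hpiv]

theorem pairDeg_insertBoth_eraseBoth {q : Pair n} {t₀ t : Fin n} (h₀ : t₀ ∉ q.1 ∪ q.2)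
    (ht : t ∈ q.1 ∩ q.2) : pairDeg (insertBoth t₀ (eraseBoth t q)) = pairDeg q := by
  simp only [mem_union, not_or, mem_inter] at h₀ ht
  have h₁ := card_pos.2 ⟨t, ht.1⟩
  have h₂ := card_pos.2 ⟨t, ht.2⟩
  simp only [pairDeg, insertBoth, eraseBoth,
    card_insert_of_notMem (fun h => h₀.1 (mem_of_mem_erase h)),
    card_insert_of_notMem (fun h => h₀.2 (mem_of_mem_erase h)),
    card_erase_of_mem ht.1, card_erase_of_mem ht.2]
  omega

theorem pairDeg_le (q : Pair n) : pairDeg q ≤ 2 * n := by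
  have h₁ := card_le_univ q.1
  have h₂ := card_le_univ q.2
  simp only [Fintype.card_fin] at h₁ h₂
  unfold pairDeg
  omega

theorem IsPivotal.pairDeg_pos {q : Pair n} (h : IsPivotal q) : 0 < pairDeg q := by
  obtain ⟨t, ht, -⟩ := h
  have := card_pos.2 ⟨t, ht⟩
  unfold pairDeg
  omega

end Pairs

section GeneratingFunctions

variable {R : Type*} {n : ℕ}

section CommSemiring

variable [CommSemiring R]

theorem sum_X_pow_card : ∑ I : Finset (Fin n), (X : R[X]) ^ #I = (1 + X) ^ n := by
  simpa [add_comm] using Fin.sum_pow_mul_eq_add_pow (X : R[X]) 1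

theorem sum_X_pow_pairDeg : ∑ q : Pair n, (X : R[X]) ^ pairDeg q = (1 + X) ^ (2 * n) := by
  simp only [pairDeg, Fintype.sum_prod_type, pow_add, ← mul_sum, ← sum_mul, sum_X_pow_card]
  ring

theorem sum_X_pow_heisDeg :
    ∑ p : HeisIdx n, (X : R[X]) ^ heisDeg p = (1 + X) ^ (2 * n + 1) := by
  rw [Fintype.sum_prod_type, Fintype.sum_bool]
  simp only [heisDeg_true, heisDeg_false, pow_succ, ← sum_mul, sum_X_pow_pairDeg]
  ring

theorem sum_pivot_eq_top :
    ∑ q : Pair n with pivot q = ⊤, (X : R[X]) ^ pairDeg q = (2 * X) ^ n := by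
  have h (I : Finset (Fin n)) : pairDeg (I, Iᶜ) = n := by
    have := card_le_univ I
    simp only [pairDeg, card_compl, Fintype.card_fin] at this ⊢
    omega
  simp only [sum_filter, pivot_eq_top_iff, Fintype.sum_prod_type, sum_ite_eq', mem_univ, if_true,
    h, sum_const, card_univ, Fintype.card_finset, Fintype.card_fin, nsmul_eq_mul]
  rw [mul_pow]
  norm_num

theorem sum_isPivotal :
    ∑ q : Pair n with IsPivotal q, (X : R[X]) ^ pairDeg q =
      X ^ 2 * ∑ q : Pair n with IsCopivotal q, (X : R[X]) ^ pairDeg q := by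
  rw [mul_sum]
  symm
  refine sum_nbij' raise lower (fun q hq => ?_) (fun q hq => ?_) (fun q hq => ?_)
    (fun q hq => ?_) (fun q hq => ?_)
  all_goals simp only [mem_univ, true_and, mem_filter] at hq ⊢
  · exact hq.isPivotal_raise
  · exact hq.isCopivotal_lower
  · exact hq.lower_raise
  · exact hq.raise_lower
  · rw [hq.pairDeg_raise, pow_add, mul_comm]

theorem sum_X_pow_pairDeg_trichotomy :
    ∑ q : Pair n, (X : R[X]) ^ pairDeg q =
      ∑ q : Pair n with IsPivotal q, X ^ pairDeg q +
        ∑ q : Pair n with IsCopivotal q, X ^ pairDeg q +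
        ∑ q : Pair n with pivot q = ⊤, X ^ pairDeg q := by
  simp only [sum_filter, ← sum_add_distrib]
  refine sum_congr rfl fun q _ => ?_
  cases h : pivot q with
  | top => simp [IsPivotal, IsCopivotal, h]
  | coe t => by_cases ht : t ∈ q.1 <;> simp [IsPivotal, IsCopivotal, h, ht]

end CommSemiring

theorem one_add_X_sq_mul_sum_isPivotal [CommRing R] :
    (1 + X ^ 2) * ∑ q : Pair n with IsPivotal q, (X : R[X]) ^ pairDeg q =
      X ^ 2 * ((1 + X) ^ (2 * n) - (2 * X) ^ n) := by
  have h := sum_X_pow_pairDeg_trichotomy (R := R) (n := n)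
  rw [sum_X_pow_pairDeg, sum_pivot_eq_top] at h
  linear_combination -X ^ 2 * h + sum_isPivotal (R := R) (n := n)

end GeneratingFunctions

section Rank

variable {k : Type*} [Field k] {n : ℕ}

variable (k n) in
noncomputable def raiseMap : HeisCE k n →ₗ[k] HeisCE k n :=
  (Pi.basisFun k (HeisIdx n)).constr k fun p =>
    if p.1 ∧ IsCopivotal p.2 then Pi.single (false, raise p.2) 1 else 0

theorem raiseMap_single_true (q : Pair n) :
    raiseMap k n (Pi.single (true, q) 1) =
      if IsCopivotal q then Pi.single (false, raise q) 1 else 0 := by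
  rw [← Pi.basisFun_apply, raiseMap, Module.Basis.constr_basis]
  simp

variable [CharP k 2]

theorem heisDAux_false (q : Pair n) :
    heisDAux k n (false, q) = ∑ t ∈ q.1 ∩ q.2, Pi.single (true, eraseBoth t q) 1 := by
  simp [heisDAux, CharTwo.neg_eq, eraseBoth]

theorem heisDAux_false_eq_sum {q : Pair n} {t₀ : Fin n} (h₀ : t₀ ∉ q.1 ∪ q.2) :
    heisDAux k n (false, q) =
      ∑ t ∈ q.1 ∩ q.2, heisDAux k n (false, insertBoth t₀ (eraseBoth t q)) := by
  simp only [mem_union, not_or] at h₀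
  have h₀' : t₀ ∉ q.1 ∩ q.2 := fun h => h₀.1 (mem_inter.1 h).1
  have hterm (t : Fin n) (ht : t ∈ q.1 ∩ q.2) :
      heisDAux k n (false, insertBoth t₀ (eraseBoth t q)) =
        Pi.single (true, eraseBoth t q) 1 +
          ∑ u ∈ (q.1 ∩ q.2).erase t,
            Pi.single (true, insertBoth t₀ (eraseBoth u (eraseBoth t q))) 1 := by
    have hinter : (insertBoth t₀ (eraseBoth t q)).1 ∩ (insertBoth t₀ (eraseBoth t q)).2 =
        insert t₀ ((q.1 ∩ q.2).erase t) := by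
      ext a; simp only [insertBoth, eraseBoth, mem_inter, mem_insert, mem_erase]; tauto
    rw [heisDAux_false, hinter, sum_insert fun h => h₀' (mem_of_mem_erase h),
      eraseBoth_insertBoth (fun h => h₀.1 (mem_of_mem_erase h))
        (fun h => h₀.2 (mem_of_mem_erase h))]
    refine congrArg _ (sum_congr rfl fun u hu => ?_)
    rw [eraseBoth_insertBoth_of_ne fun (h : u = t₀) => h₀' (h ▸ mem_of_mem_erase hu)]
  rw [sum_congr rfl hterm, sum_add_distrib, ← heisDAux_false, left_eq_add]
  -- each `z ∧ x_{I∖{t,u}} ∧ y_{J∖{t,u}}` with `t ≠ u` occurs twice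
  refine sum_sum_erase_eq_zero_of_symm (fun x => funext fun p => CharTwo.add_self_eq_zero (x p))
    _ _ fun t u => ?_
  rw [eraseBoth_comm]

theorem heisDAux_false_mem_span (q : Pair n) :
    heisDAux k n (false, q) ∈ Submodule.span k
      ((fun q => heisDAux k n (false, q)) '' {q' | IsPivotal q' ∧ pairDeg q' = pairDeg q}) := by
  cases hpiv : pivot q with
  | top =>
    rw [pivot_eq_top_iff] at hpiv
    simp [heisDAux_false, hpiv]
  | coe t₀ =>
    by_cases h₀ : t₀ ∈ q.1
    · exact Submodule.subset_span ⟨q, ⟨⟨t₀, h₀, hpiv⟩, rfl⟩, rfl⟩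
    · have h₀' : t₀ ∉ q.1 ∪ q.2 := by simp [h₀, mem_snd_iff_of_pivot_eq hpiv]
      rw [heisDAux_false_eq_sum h₀']
      exact Submodule.sum_mem _ fun t ht => Submodule.subset_span
        ⟨_, ⟨isPivotal_insertBoth_eraseBoth hpiv h₀ ht, pairDeg_insertBoth_eraseBoth h₀' ht⟩, rfl⟩

theorem map_heisChains_eq_span (i : ℕ) :
    (heisChains k n i).map (heisD k n) = Submodule.span k
      ((fun q => heisDAux k n (false, q)) '' {q | IsPivotal q ∧ pairDeg q = i}) := by
  rw [heisChains_eq_span, Submodule.map_span, Set.image_image]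
  simp only [Pi.basisFun_apply, heisD_single]
  refine le_antisymm (Submodule.span_le.2 ?_) (Submodule.span_mono ?_)
  · rintro _ ⟨⟨_ | _, q⟩, rfl, rfl⟩
    · simpa using heisDAux_false_mem_span (k := k) q
    · simp [heisDAux_true]
  · rintro _ ⟨q, ⟨-, rfl⟩, rfl⟩
    exact ⟨(false, q), heisDeg_false q, rfl⟩

theorem IsPivotal.raiseMap_heisDAux {q : Pair n} (h : IsPivotal q) :
    raiseMap k n (heisDAux k n (false, q)) = Pi.single (false, q) 1 := by
  obtain ⟨t₀, h₀, hpiv⟩ := h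
  have h₀' : t₀ ∈ q.1 ∩ q.2 := mem_inter.2 ⟨h₀, (mem_snd_iff_of_pivot_eq hpiv).2 h₀⟩
  rw [heisDAux_false, map_sum, sum_eq_single_of_mem t₀ h₀' fun t ht htne => ?_]
  · rw [raiseMap_single_true, if_pos ((isCopivotal_eraseBoth_iff hpiv h₀ h₀').2 rfl),
      ← lower_of_pivot_eq hpiv, IsPivotal.raise_lower ⟨t₀, h₀, hpiv⟩]
  · rw [raiseMap_single_true, if_neg fun hc => htne ((isCopivotal_eraseBoth_iff hpiv h₀ ht).1 hc)]

theorem linearIndepOn_heisDAux_isPivotal :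
    LinearIndepOn k (fun q : Pair n => heisDAux k n (false, q)) {q | IsPivotal q} := by
  refine LinearIndepOn.of_comp (raiseMap k n) ?_
  have hsingle := ((Pi.basisFun k _).linearIndependent.comp (fun q : Pair n => (false, q))
    fun _ _ h => (Prod.ext_iff.1 h).2).linearIndepOn {q | IsPivotal q}
  exact hsingle.congr fun q hq => by simp [IsPivotal.raiseMap_heisDAux hq]

theorem finrank_map_heisChains (i : ℕ) :
    Module.finrank k ((heisChains k n i).map (heisD k n)) =
      #{q : Pair n | IsPivotal q ∧ pairDeg q = i} := by
  rw [map_heisChains_eq_span, Set.image_eq_range]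
  exact (finrank_span_eq_card (linearIndepOn_heisDAux_isPivotal.mono
    fun q hq => hq.1)).trans (Fintype.card_subtype _)

end Rank

section Betti

variable {k R : Type*} [Field k] [CommSemiring R] {n : ℕ}

theorem heisDeg_le (p : HeisIdx n) : heisDeg p ≤ 2 * n + 1 := by
  obtain ⟨_ | _, q⟩ := p <;> simp only [heisDeg_false, heisDeg_true] <;> linarith [pairDeg_le q]

theorem finrank_heisChains_eq_zero {i : ℕ} (hi : 2 * n + 1 < i) :
    Module.finrank k (heisChains k n i) = 0 := by
  rw [finrank_heisChains, card_eq_zero, filter_eq_empty_iff]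
  exact fun p _ => ((heisDeg_le p).trans_lt hi).ne

theorem finrank_map_heisChains_eq_zero {i : ℕ} (hi : 2 * n + 1 < i) :
    Module.finrank k ((heisChains k n i).map (heisD k n)) = 0 :=
  Nat.eq_zero_of_le_zero <| (Submodule.finrank_map_le _ _).trans (finrank_heisChains_eq_zero hi).le

theorem sum_range_finrank_heisChains :
    ∑ i ∈ range (2 * n + 2), C (Module.finrank k (heisChains k n i) : R) * X ^ i =
      (1 + X) ^ (2 * n + 1) := by
  simp only [finrank_heisChains]
  rw [sum_range_card_filter_mul_X_pow _ _ fun p _ => Nat.lt_succ_of_le (heisDeg_le p),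
    sum_X_pow_heisDeg]

variable [CharP k 2]

theorem sum_range_finrank_map_heisChains :
    ∑ i ∈ range (2 * n + 2),
        C (Module.finrank k ((heisChains k n i).map (heisD k n)) : R) * X ^ i =
      ∑ q : Pair n with IsPivotal q, X ^ pairDeg q := by
  simp only [finrank_map_heisChains, ← filter_filter]
  exact sum_range_card_filter_mul_X_pow _ _ fun q _ => by linarith [pairDeg_le q]

theorem finrank_map_heisChains_zero :
    Module.finrank k ((heisChains k n 0).map (heisD k n)) = 0 := by
  rw [finrank_map_heisChains, card_eq_zero, filter_eq_empty_iff]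
  exact fun q _ ⟨hq, hdeg⟩ => hq.pairDeg_pos.ne' hdeg

end Betti

end Heis

/-- **Main theorem.** For a field `k` of characteristic `2`, the generating function of
the Betti numbers of the Heisenberg Lie algebra `h_n` satisfies
`(1+t^2) * (Σ_{i ≥ 0} dim_k H_i(h_n; k) t^i) = (1+t^3)(1+t)^{2n} + (t+t^2)(2t)^n`
in `ℤ[t]`, equivalently the generating function is
`((1+t^3)(1+t)^{2n} + (t+t^2)(2t)^n) / (1+t^2)`.  (The homology vanishes in all degrees
above `2n+1`, so the generating function is the stated finite sum.) -/
theorem heisenberg_betti_generating_function (k : Type*) [Field k] [CharP k 2] (n : ℕ) :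
    (∀ i, 2 * n + 2 ≤ i → Module.finrank k (HeisHomology k n i) = 0) ∧
    (1 + X ^ 2 : ℤ[X]) *
        ∑ i ∈ Finset.range (2 * n + 2),
          Polynomial.C (Module.finrank k (HeisHomology k n i) : ℤ) * X ^ i =
      (1 + X ^ 3) * (1 + X) ^ (2 * n) + (X + X ^ 2) * (2 * X) ^ n := by
  have hdim (i : ℕ) := Heis.finrank_heisHomology_add (k := k) (n := n) i
  refine ⟨fun i hi => ?_, ?_⟩
  · linarith [hdim i, Heis.finrank_heisChains_eq_zero (k := k) (n := n) hi]
  have key := X_mul_sum_add_one_add_X_mul_sum (N := 2 * n + 2)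
    (fun i => (Module.finrank k (HeisHomology k n i) : ℤ))
    (fun i => (Module.finrank k ((heisChains k n i).map (heisD k n)) : ℤ))
    (fun i => (Module.finrank k (heisChains k n i) : ℤ))
    (fun i _ => by exact_mod_cast hdim i) (by simp [Heis.finrank_map_heisChains_zero])
    (by simp [Heis.finrank_map_heisChains_eq_zero (Nat.lt_succ_self _)])
  rw [Heis.sum_range_finrank_map_heisChains, Heis.sum_range_finrank_heisChains] at key
  refine mul_left_cancel₀ (X_ne_zero (R := ℤ)) ?_
  linear_combination
    (1 + X ^ 2) * key - (1 + X) * Heis.one_add_X_sq_mul_sum_isPivotal (R := ℤ) (n := n)
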